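/- Let H be a complex Hilbert space and G as above with Im⟨G(w)v,v⟩ = 0 for all v, w. Define iterates u^[0](t) = u(t_n) (constant) and i ∂_t u^[k+1] = G(u^[k](t)) u^[k+1], u^[k+1](t_n) = u(t_n). Assume G is Lipschitz on a ball containing all iterates and u, with Lipschitz constant L (in operator norm applied to u: ‖(G(v)−G(w))u‖ ≤ L‖v−w‖·‖u‖ say). If ρ_k(t) := ‖u^[k](t) − u(t)‖ satisfies ρ_1(t) ≤ c₁ h^{p₁+1} on [t_n, t_n+h], then ρ_k(t) ≤ (L‖u‖)^{k−1} c₁ h^{p₁+k} for all k ≥ 1, where ‖u‖ bounds sup_t ‖u(t)‖. In particular the iteration converges as k → ∞ whenever h < (L‖u‖)^{-1}. -/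

import Mathlib

/-!
Write `d = U (k+1) - u`. Subtracting the two equations gives
`d' = -i G(U k) d - i (G(U k) - G(u)) u`. Since `⟨G(w)v, v⟩` is real, the first term is
skew and does not change `‖d‖`, so `‖d‖` grows at most at rate `‖(G(U k) - G(u)) u‖ ≤ L M ρ_k`.
Hence `ρ_{k+1} ≤ h L M ρ_k` on `[t_n, t_n + h]`, and induction from `ρ_1` gives the
geometric bound, which tends to `0` when `h L M < 1`.
-/

open Set Complex

theorem norm_le_norm_add_mul_of_inner_deriv_le {F : Type*} [NormedAddCommGroup F]
    [InnerProductSpace ℝ F] {f f' : ℝ → F} {a b ε : ℝ} (hε : 0 ≤ ε)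
    (hf : ∀ t ∈ Icc a b, HasDerivAt f (f' t) t)
    (hbound : ∀ t ∈ Ico a b, inner ℝ (f t) (f' t) ≤ ε * ‖f t‖) :
    ∀ t ∈ Icc a b, ‖f t‖ ≤ ‖f a‖ + ε * (t - a) := by
  intro t ht
  refine le_of_forall_pos_le_add fun η hη => ?_
  -- `‖f‖` need not be differentiable where `f` vanishes; `√(‖f‖² + η²)` always is.
  set g : ℝ → ℝ := fun s => √(‖f s‖ ^ 2 + η ^ 2) with hg_def
  have hpos : ∀ s, 0 < ‖f s‖ ^ 2 + η ^ 2 := fun s => by positivity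
  have hg : ∀ s ∈ Icc a b, HasDerivAt g (2 * inner ℝ (f s) (f' s) / (2 * g s)) s :=
    fun s hs => ((hf s hs).norm_sq.add_const _).sqrt (hpos s).ne'
  have hnorm_le : ∀ s, ‖f s‖ ≤ g s := fun s =>
    Real.le_sqrt_of_sq_le (le_add_of_nonneg_right (sq_nonneg η))
  have hga : g a ≤ ‖f a‖ + η := by
    rw [hg_def, Real.sqrt_le_iff]
    exact ⟨by positivity, by nlinarith [norm_nonneg (f a)]⟩
  have hslope : ∀ s ∈ Ico a b, 2 * inner ℝ (f s) (f' s) / (2 * g s) ≤ ε := by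
    intro s hs
    rw [div_le_iff₀ (by positivity)]
    nlinarith [hbound s hs, hnorm_le s]
  have hB : ∀ s, HasDerivAt (fun s => g a + ε * (s - a)) ε s := fun s => by
    simpa using ((hasDerivAt_id s).sub_const a).const_mul ε |>.const_add (g a)
  have hgt := image_le_of_deriv_right_le_deriv_boundary
    (fun s hs => (hg s hs).continuousAt.continuousWithinAt)
    (fun s hs => (hg s (Ico_subset_Icc_self hs)).hasDerivWithinAt) (by simp)
    (fun s _ => (hB s).continuousAt.continuousWithinAt)
    (fun s _ => (hB s).hasDerivWithinAt) hslope ht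
  linarith [hnorm_le t]

section Linearised

variable {H : Type*} [NormedAddCommGroup H] [InnerProductSpace ℂ H]

theorem re_inner_neg_I_smul_apply_eq_zero (T : H →L[ℂ] H) (x : H)
    (hT : (inner ℂ (T x) x).im = 0) : (inner ℂ x ((-I) • T x)).re = 0 := by
  have him : (inner ℂ x (T x)).im = 0 := by rw [← inner_conj_symm, conj_im, hT, neg_zero]
  simp [inner_smul_right, him]

variable {G : H → (H →L[ℂ] H)}

theorem norm_sub_le_of_linearised_step (hG : ∀ w v : H, (inner ℂ (G w v) v).im = 0)
    {z v u : ℝ → H} {a b ε : ℝ} (hab : a ≤ b)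
    (hv : ∀ t, HasDerivAt v ((-I) • G (z t) (v t)) t)
    (hu : ∀ t, HasDerivAt u ((-I) • G (u t) (u t)) t) (hinit : v a = u a)
    (hε : ∀ t ∈ Icc a b, ‖(G (z t) - G (u t)) (u t)‖ ≤ ε) :
    ∀ t ∈ Icc a b, ‖v t - u t‖ ≤ ε * (b - a) := by
  have hε0 : 0 ≤ ε := (norm_nonneg _).trans (hε a ⟨le_rfl, hab⟩)
  let _ := InnerProductSpace.complexToReal (G := H)
  have hd : ∀ t, HasDerivAt (fun s => v s - u s)
      ((-I) • G (z t) (v t - u t) + (-I) • (G (z t) - G (u t)) (u t)) t := fun t =>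
    ((hv t).sub (hu t)).congr_deriv (by
      simp only [map_sub, sub_apply, smul_sub]; abel)
  have hinner : ∀ t ∈ Ico a b, inner ℝ (v t - u t)
      ((-I) • G (z t) (v t - u t) + (-I) • (G (z t) - G (u t)) (u t)) ≤ ε * ‖v t - u t‖ := by
    intro t ht
    rw [real_inner_eq_re_inner ℂ, inner_add_right, RCLike.re_to_complex, add_re,
      re_inner_neg_I_smul_apply_eq_zero _ _ (hG _ _), zero_add]
    calc (inner ℂ (v t - u t) ((-I) • (G (z t) - G (u t)) (u t))).re
        ≤ ‖v t - u t‖ * ‖(-I) • (G (z t) - G (u t)) (u t)‖ := re_inner_le_norm (𝕜 := ℂ) _ _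
      _ ≤ ‖v t - u t‖ * ε := by
        rw [norm_smul, norm_neg, norm_I, one_mul]
        exact mul_le_mul_of_nonneg_left (hε t (Ico_subset_Icc_self ht)) (norm_nonneg _)
      _ = ε * ‖v t - u t‖ := mul_comm _ _
  intro t ht
  have := norm_le_norm_add_mul_of_inner_deriv_le hε0 (fun t _ => hd t) hinner t ht
  rw [hinit, sub_self, norm_zero, zero_add] at this
  exact this.trans (mul_le_mul_of_nonneg_left (by linarith [ht.2]) hε0)

theorem iterate_error_le (hG : ∀ w v : H, (inner ℂ (G w v) v).im = 0)
    {tn h L M C : ℝ} (hh : 0 ≤ h) {u : ℝ → H} {U : ℕ → ℝ → H}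
    (hu : ∀ t, HasDerivAt u ((-I) • G (u t) (u t)) t)
    (hUode : ∀ k t, HasDerivAt (U (k + 1)) ((-I) • G (U k t) (U (k + 1) t)) t)
    (hUinit : ∀ k, U (k + 1) tn = u tn) (hL : 0 ≤ L)
    (hLip : ∀ v w x : H, ‖(G v - G w) x‖ ≤ L * ‖v - w‖ * ‖x‖) (hM : ∀ t, ‖u t‖ ≤ M)
    (hρ₁ : ∀ t ∈ Icc tn (tn + h), ‖U 1 t - u t‖ ≤ C) (n : ℕ) :
    ∀ t ∈ Icc tn (tn + h), ‖U (n + 1) t - u t‖ ≤ C * (L * M * h) ^ n := by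
  induction n with
  | zero => simpa using hρ₁
  | succ n ih =>
    set B := C * (L * M * h) ^ n
    have hdefect : ∀ t ∈ Icc tn (tn + h), ‖(G (U (n + 1) t) - G (u t)) (u t)‖ ≤ L * B * M := by
      intro t ht
      have hB : 0 ≤ B := (norm_nonneg _).trans (ih t ht)
      calc ‖(G (U (n + 1) t) - G (u t)) (u t)‖ ≤ L * ‖U (n + 1) t - u t‖ * ‖u t‖ := hLip _ _ _
        _ ≤ L * B * M := mul_le_mul (mul_le_mul_of_nonneg_left (ih t ht) hL) (hM t)
            (norm_nonneg _) (mul_nonneg hL hB)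
    intro t ht
    calc ‖U (n + 1 + 1) t - u t‖ ≤ L * B * M * (tn + h - tn) :=
          norm_sub_le_of_linearised_step hG (by linarith) (hUode (n + 1)) hu (hUinit (n + 1))
            hdefect t ht
      _ = C * (L * M * h) ^ (n + 1) := by ring

end Linearised

theorem iterated_linearisation_convergence_general
    {H : Type*} [NormedAddCommGroup H] [InnerProductSpace ℂ H]
    (G : H → (H →L[ℂ] H))
    (hG : ∀ w v : H, (inner ℂ (G w v) v : ℂ).im = 0)
    (tn h : ℝ) (hh : 0 < h)
    (u : ℝ → H) (U : ℕ → ℝ → H)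
    (hu : ∀ t : ℝ, HasDerivAt u ((-Complex.I) • (G (u t) (u t))) t)
    (hUode : ∀ k : ℕ, ∀ t : ℝ,
      HasDerivAt (U (k + 1)) ((-Complex.I) • (G (U k t) (U (k + 1) t))) t)
    (hUinit : ∀ k : ℕ, U (k + 1) tn = u tn)
    (L M c₁ : ℝ) (hL : 0 ≤ L)
    (hLip : ∀ v w x : H, ‖(G v - G w) x‖ ≤ L * ‖v - w‖ * ‖x‖)
    (hMbound : ∀ t : ℝ, ‖u t‖ ≤ M)
    (p₁ : ℕ)
    (hρ₁ : ∀ t ∈ Set.Icc tn (tn + h), ‖U 1 t - u t‖ ≤ c₁ * h ^ (p₁ + 1)) :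
    (∀ k : ℕ, 1 ≤ k → ∀ t ∈ Set.Icc tn (tn + h),
      ‖U k t - u t‖ ≤ (L * M) ^ (k - 1) * c₁ * h ^ (p₁ + k)) ∧
    (h < (L * M)⁻¹ →
      ∀ t ∈ Set.Icc tn (tn + h),
        Filter.Tendsto (fun k => ‖U k t - u t‖) Filter.atTop (nhds 0)) := by
  have hρ := iterate_error_le hG hh.le hu hUode hUinit hL hLip hMbound hρ₁
  refine ⟨fun k hk t ht => ?_, fun hsmall t ht => ?_⟩
  · obtain ⟨n, rfl⟩ := Nat.exists_eq_add_of_le' hk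
    calc ‖U (n + 1) t - u t‖ ≤ c₁ * h ^ (p₁ + 1) * (L * M * h) ^ n := hρ n t ht
      _ = (L * M) ^ (n + 1 - 1) * c₁ * h ^ (p₁ + (n + 1)) := by
        rw [Nat.add_sub_cancel]; ring
  · have hLM : 0 < L * M := by
      by_contra! hLM
      linarith [inv_nonpos.2 hLM]
    have hq : L * M * h < 1 := by
      have := mul_lt_mul_of_pos_left hsmall hLM
      rwa [mul_inv_cancel₀ hLM.ne'] at this
    rw [← Filter.tendsto_add_atTop_iff_nat 1]
    refine squeeze_zero (fun _ => norm_nonneg _) (fun n => hρ n t ht) ?_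
    simpa using (tendsto_pow_atTop_nhds_zero_of_lt_one (mul_pos hLM hh).le hq).const_mul
      (c₁ * h ^ (p₁ + 1))

/-- Theorem 2 (convergence of iterated linearisation): each iterate of the
linearised dispersive equation gains one order in `h`, and the iteration
converges geometrically whenever `h < (L‖u‖)⁻¹`. -/
theorem iterated_linearisation_convergence
    {H : Type*} [NormedAddCommGroup H] [InnerProductSpace ℂ H] [CompleteSpace H]
    (G : H → (H →L[ℂ] H))
    (hG : ∀ w v : H, (inner ℂ (G w v) v : ℂ).im = 0)
    (tn h : ℝ) (hh : 0 < h)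
    (u : ℝ → H) (U : ℕ → ℝ → H)
    (hu : ∀ t : ℝ, HasDerivAt u ((-Complex.I) • (G (u t) (u t))) t)
    (hU0 : ∀ t : ℝ, U 0 t = u tn)
    (hUode : ∀ k : ℕ, ∀ t : ℝ,
      HasDerivAt (U (k + 1)) ((-Complex.I) • (G (U k t) (U (k + 1) t))) t)
    (hUinit : ∀ k : ℕ, U (k + 1) tn = u tn)
    (L M c₁ : ℝ) (hL : 0 ≤ L) (hM : 0 ≤ M) (hc₁ : 0 ≤ c₁)
    (hLip : ∀ v w x : H, ‖(G v - G w) x‖ ≤ L * ‖v - w‖ * ‖x‖)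
    (hMbound : ∀ t : ℝ, ‖u t‖ ≤ M)
    (p₁ : ℕ)
    (hρ₁ : ∀ t ∈ Set.Icc tn (tn + h), ‖U 1 t - u t‖ ≤ c₁ * h ^ (p₁ + 1)) :
    (∀ k : ℕ, 1 ≤ k → ∀ t ∈ Set.Icc tn (tn + h),
      ‖U k t - u t‖ ≤ (L * M) ^ (k - 1) * c₁ * h ^ (p₁ + k)) ∧
    (h < (L * M)⁻¹ →
      ∀ t ∈ Set.Icc tn (tn + h),
        Filter.Tendsto (fun k => ‖U k t - u t‖) Filter.atTop (nhds 0)) :=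
  iterated_linearisation_convergence_general G hG tn h hh u U hu hUode hUinit L M c₁ hL hLip hMbound
    p₁ hρ₁
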